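/- Soundness of NS(V): if a nested sequent Γ ⊢ Δ is derivable in the nested sequent calculus NS(V), then Γ ⊢ Δ is valid, i.e. its formula interpretation ι(Γ ⊢ Δ) holds at every precisification of every standpoint model over V. -/

import Mathlib

/-- Formulas of propositional standpoint logic in negation normal form,
over propositional variables `P` and standpoint symbols `S`. -/
inductive Fml (P S : Type) : Type
  | atom  : P → Fml P S
  | natom : P → Fml P S
  | or    : Fml P S → Fml P S → Fml P S
  | and   : Fml P S → Fml P S → Fml P S
  | box   : S → Fml P S → Fml P S
  | dia   : S → Fml P S → Fml P S

/-- A standpoint model over the vocabulary `(P, S)` with distinguished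
universal standpoint `star`, whose set of precisifications is `W`. -/
structure Model (P S : Type) (star : S) (W : Type) : Type where
  nonempty : Nonempty W
  sig : S → Set W
  val : P → Set W
  sig_nonempty : ∀ s, (sig s).Nonempty
  sig_star : sig star = Set.univ

/-- Satisfaction of a formula at a precisification of a standpoint model. -/
def sat {P S W : Type} {star : S} (M : Model P S star W) : W → Fml P S → Prop
  | w, .atom p  => w ∈ M.val p
  | w, .natom p => w ∉ M.val p
  | w, .or φ ψ  => sat M w φ ∨ sat M w ψ
  | w, .and φ ψ => sat M w φ ∧ sat M w ψ
  | _, .box s φ => ∀ v ∈ M.sig s, sat M v φ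
  | _, .dia s φ => ∃ v ∈ M.sig s, sat M v φ

/-- `M` satisfies every sharpening statement `s ≼ s'` in `Γ`
(this does not depend on the precisification). -/
def satSharp {P S W : Type} {star : S} (M : Model P S star W) (Γ : Set (S × S)) : Prop :=
  ∀ q ∈ Γ, M.sig q.1 ⊆ M.sig q.2

/-- `SpRel star Γ s s'` is `s ≼*_Γ s'`: the least reflexive-transitive relation
containing all pairs of `Γ` and relating every standpoint to `star`. -/
inductive SpRel {S : Type} (star : S) (Γ : Set (S × S)) : S → S → Prop
  | base {s s'} : (s, s') ∈ Γ → SpRel star Γ s s'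
  | toStar (s) : SpRel star Γ s star
  | refl (s) : SpRel star Γ s s
  | trans {s t u} : SpRel star Γ s t → SpRel star Γ t u → SpRel star Γ s u

/-- Satisfaction at `w` of the formula interpretation
`ι(Γ ⊢ Σ₀, (s₁)[Σ₁], …, (sₙ)[Σₙ]) = ⋀Γ → ⋁Σ₀ ∨ ⋁ᵢ ◻_{sᵢ}(⋁Σᵢ)`
of the nested sequent with antecedent `Γ`, root component `root = Σ₀`
and nestings `nest = [(s₁, Σ₁), …, (sₙ, Σₙ)]`. -/
def satSeq {P S W : Type} {star : S} (M : Model P S star W) (w : W)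
    (Γ : Set (S × S)) (root : Multiset (Fml P S))
    (nest : List (S × Multiset (Fml P S))) : Prop :=
  satSharp M Γ →
    (∃ φ ∈ root, sat M w φ) ∨ ∃ e ∈ nest, ∀ v ∈ M.sig e.1, ∃ φ ∈ e.2, sat M v φ

/-- Validity of a nested sequent: its formula interpretation holds at every
precisification of every standpoint model. -/
def ValidSeq {P S : Type} (star : S) (Γ : Set (S × S))
    (root : Multiset (Fml P S)) (nest : List (S × Multiset (Fml P S))) : Prop :=
  ∀ (W : Type) (M : Model P S star W) (w : W), satSeq M w Γ root nest

/-- Derivability in the nested sequent calculus `NS(V)`, for sequents with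
antecedent `Γ`, root component `root` and nestings `nest`.  The constructors
are the rules of `NS(V)` read bottom-up (premises above, conclusion below). -/
inductive Deriv {P S : Type} (star : S) (Γ : Set (S × S)) :
    Multiset (Fml P S) → List (S × Multiset (Fml P S)) → Prop
  /-- `(id)`: some component contains both `p` and `¬p`. -/
  | id {root nest} (p : P) :
      ((Fml.atom p ∈ root ∧ Fml.natom p ∈ root) ∨
        ∃ e ∈ nest, Fml.atom p ∈ e.2 ∧ Fml.natom p ∈ e.2) →
      Deriv star Γ root nest
  /-- `(∨)`, principal formula in the root component. -/
  | orRoot {root nest} {φ ψ : Fml P S} : Fml.or φ ψ ∈ root →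
      Deriv star Γ (φ ::ₘ ψ ::ₘ root) nest → Deriv star Γ root nest
  /-- `(∨)`, principal formula in a nesting. -/
  | orNest {root l₁ l₂ s Θ} {φ ψ : Fml P S} : Fml.or φ ψ ∈ Θ →
      Deriv star Γ root (l₁ ++ (s, φ ::ₘ ψ ::ₘ Θ) :: l₂) →
      Deriv star Γ root (l₁ ++ (s, Θ) :: l₂)
  /-- `(∧)`, principal formula in the root component. -/
  | andRoot {root nest} {φ ψ : Fml P S} : Fml.and φ ψ ∈ root →
      Deriv star Γ (φ ::ₘ root) nest → Deriv star Γ (ψ ::ₘ root) nest →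
      Deriv star Γ root nest
  /-- `(∧)`, principal formula in a nesting. -/
  | andNest {root l₁ l₂ s Θ} {φ ψ : Fml P S} : Fml.and φ ψ ∈ Θ →
      Deriv star Γ root (l₁ ++ (s, φ ::ₘ Θ) :: l₂) →
      Deriv star Γ root (l₁ ++ (s, ψ ::ₘ Θ) :: l₂) →
      Deriv star Γ root (l₁ ++ (s, Θ) :: l₂)
  /-- `(◻ₛ)`: append a fresh nesting `(s)[φ]` for a principal `◻ₛφ`. -/
  | box {root nest s} {φ : Fml P S} :
      (Fml.box s φ ∈ root ∨ ∃ e ∈ nest, Fml.box s φ ∈ e.2) →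
      Deriv star Γ root (nest ++ [(s, ({φ} : Multiset (Fml P S)))]) →
      Deriv star Γ root nest
  /-- `(nₛ)`: append a fresh empty nesting `(s)[∅]`. -/
  | nrule {root nest} (s : S) :
      Deriv star Γ root (nest ++ [(s, (∅ : Multiset (Fml P S)))]) →
      Deriv star Γ root nest
  /-- `(◇ₛ¹)`: `◇ₛφ` principal in a component of `Δ`, `s' ≼*_Γ s`,
  and `φ` is added to the displayed nesting `(s')[Θ]`. -/
  | dia1 {root l₁ l₂ s s' Θ} {φ : Fml P S} : SpRel star Γ s' s →
      (Fml.dia s φ ∈ root ∨ ∃ e ∈ l₁ ++ l₂, Fml.dia s φ ∈ e.2) →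
      Deriv star Γ root (l₁ ++ (s', φ ::ₘ Θ) :: l₂) →
      Deriv star Γ root (l₁ ++ (s', Θ) :: l₂)
  /-- `(◇ₛ²)`: `◇ₛφ` principal inside the nesting `(s')[◇ₛφ, Θ]`, `s' ≼*_Γ s`. -/
  | dia2 {root l₁ l₂ s s' Θ} {φ : Fml P S} : SpRel star Γ s' s →
      Deriv star Γ root (l₁ ++ (s', Fml.dia s φ ::ₘ φ ::ₘ Θ) :: l₂) →
      Deriv star Γ root (l₁ ++ (s', Fml.dia s φ ::ₘ Θ) :: l₂)
  /-- `(◇*)`: `◇*φ` principal in some component, `φ` is added to the root. -/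
  | diaStar {root nest} {φ : Fml P S} :
      (Fml.dia star φ ∈ root ∨ ∃ e ∈ nest, Fml.dia star φ ∈ e.2) →
      Deriv star Γ (φ ::ₘ root) nest → Deriv star Γ root nest

/-!
Soundness is proved rule by rule, in a fixed model `M` of `Γ` at a fixed precisification `w`.
For `(∨)`, `(∧)` and `(◇ₛ²)` the premise's active component entails the conclusion's at every
precisification of the relevant standpoint; `(◇ₛ¹)` and `(◇ₛ²)` use that `s' ≼*_Γ s` forces
`σ(s') ⊆ σ(s)`. For `(◻ₛ)`, `(◇ₛ¹)` and `(◇*)` the point is that `◻ₛφ` and `◇ₛφ` have the same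
truth value at all precisifications: once the premise makes the principal formula true, it is
true in every component containing it, and that component witnesses the conclusion. `(nₛ)` is
sound because `σ(s)` is nonempty, so an empty nesting `(s)[∅]` is false.
-/

section Soundness

variable {P S W : Type} {star : S} (M : Model P S star W)

def SatComp (v : W) (Θ : Multiset (Fml P S)) : Prop :=
  ∃ φ ∈ Θ, sat M v φ

def SatNest (e : S × Multiset (Fml P S)) : Prop :=
  ∀ v ∈ M.sig e.1, SatComp M v e.2

def SatCons (w : W) (root : Multiset (Fml P S)) (nest : List (S × Multiset (Fml P S))) :
    Prop :=
  SatComp M w root ∨ ∃ e ∈ nest, SatNest M e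

variable {M}

theorem SpRel.sig_subset {Γ : Set (S × S)} (hΓ : satSharp M Γ) {s s' : S}
    (h : SpRel star Γ s s') : M.sig s ⊆ M.sig s' := by
  induction h with
  | base h => exact hΓ _ h
  | toStar s => simp [M.sig_star]
  | refl s => exact subset_rfl
  | trans _ _ ih₁ ih₂ => exact ih₁.trans ih₂

section Component

variable {v : W} {φ ψ χ : Fml P S} {Θ : Multiset (Fml P S)}

theorem satComp_cons : SatComp M v (φ ::ₘ Θ) ↔ sat M v φ ∨ SatComp M v Θ := by
  simp [SatComp]

theorem SatComp.of_cons_of_mem (hχ : χ ∈ Θ) (himp : sat M v φ → sat M v χ)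
    (h : SatComp M v (φ ::ₘ Θ)) : SatComp M v Θ :=
  (satComp_cons.1 h).elim (fun hφ => ⟨χ, hχ, himp hφ⟩) id

theorem SatComp.of_cons_cons_of_or_mem (hor : Fml.or φ ψ ∈ Θ)
    (h : SatComp M v (φ ::ₘ ψ ::ₘ Θ)) : SatComp M v Θ :=
  (h.of_cons_of_mem (Multiset.mem_cons_of_mem hor) Or.inl).of_cons_of_mem hor Or.inr

theorem SatComp.of_cons_of_cons_of_and_mem (hand : Fml.and φ ψ ∈ Θ)
    (hφ : SatComp M v (φ ::ₘ Θ)) (hψ : SatComp M v (ψ ::ₘ Θ)) : SatComp M v Θ := by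
  rcases satComp_cons.1 hφ, satComp_cons.1 hψ with ⟨hφ | hΘ, hψ | hΘ'⟩
  · exact ⟨_, hand, hφ, hψ⟩
  all_goals assumption

theorem satComp_of_atom_mem_of_natom_mem {p : P} (hpos : Fml.atom p ∈ Θ)
    (hneg : Fml.natom p ∈ Θ) : SatComp M v Θ := by
  by_cases hv : v ∈ M.val p
  · exact ⟨_, hpos, hv⟩
  · exact ⟨_, hneg, hv⟩

end Component

section Sequent

variable {w : W} {root R₁ R₂ : Multiset (Fml P S)} {nest l₁ l₂ : List (S × Multiset (Fml P S))}

theorem satCons_middle_iff {e : S × Multiset (Fml P S)} :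
    SatCons M w root (l₁ ++ e :: l₂) ↔ SatNest M e ∨ SatCons M w root (l₁ ++ l₂) := by
  simp only [SatCons, List.mem_append, List.mem_cons, or_and_right, exists_or, exists_eq_left]
  grind

theorem satCons_append_singleton_iff {e : S × Multiset (Fml P S)} :
    SatCons M w root (nest ++ [e]) ↔ SatNest M e ∨ SatCons M w root nest := by
  simpa using satCons_middle_iff (l₁ := nest) (l₂ := []) (root := root) (w := w) (e := e)

theorem SatCons.of_mem_of_forall_sat {φ : Fml P S}
    (hmem : φ ∈ root ∨ ∃ e ∈ nest, φ ∈ e.2) (hφ : ∀ v, sat M v φ) : SatCons M w root nest := by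
  rcases hmem with hroot | ⟨e, he, hφe⟩
  · exact Or.inl ⟨φ, hroot, hφ w⟩
  · exact Or.inr ⟨e, he, fun v _ => ⟨φ, hφe, hφ v⟩⟩

theorem SatCons.root_of_imp₂ {R : Multiset (Fml P S)}
    (himp : SatComp M w R₁ → SatComp M w R₂ → SatComp M w R)
    (h₁ : SatCons M w R₁ nest) (h₂ : SatCons M w R₂ nest) : SatCons M w R nest := by
  rcases h₁, h₂ with ⟨h₁ | h₁, h₂ | h₂⟩
  · exact Or.inl (himp h₁ h₂)
  all_goals exact Or.inr ‹_›

theorem SatCons.root_of_imp {R : Multiset (Fml P S)} (himp : SatComp M w R₁ → SatComp M w R)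
    (h : SatCons M w R₁ nest) : SatCons M w R nest :=
  root_of_imp₂ (fun h _ => himp h) h h

theorem SatCons.nest_of_imp₂ {s : S} {Θ₁ Θ₂ Θ : Multiset (Fml P S)}
    (himp : ∀ v ∈ M.sig s, SatComp M v Θ₁ → SatComp M v Θ₂ → SatComp M v Θ)
    (h₁ : SatCons M w root (l₁ ++ (s, Θ₁) :: l₂)) (h₂ : SatCons M w root (l₁ ++ (s, Θ₂) :: l₂)) :
    SatCons M w root (l₁ ++ (s, Θ) :: l₂) := by
  rw [satCons_middle_iff] at h₁ h₂ ⊢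
  rcases h₁, h₂ with ⟨h₁ | h₁, h₂ | h₂⟩
  · exact Or.inl fun v hv => himp v hv (h₁ v hv) (h₂ v hv)
  all_goals exact Or.inr ‹_›

theorem SatCons.nest_of_imp {s : S} {Θ₁ Θ : Multiset (Fml P S)}
    (himp : ∀ v ∈ M.sig s, SatComp M v Θ₁ → SatComp M v Θ)
    (h : SatCons M w root (l₁ ++ (s, Θ₁) :: l₂)) : SatCons M w root (l₁ ++ (s, Θ) :: l₂) :=
  nest_of_imp₂ (fun v hv h _ => himp v hv h) h h

end Sequent

theorem Deriv.satCons {Γ : Set (S × S)} {root : Multiset (Fml P S)}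
    {nest : List (S × Multiset (Fml P S))} (h : Deriv star Γ root nest) (hΓ : satSharp M Γ)
    (w : W) : SatCons M w root nest := by
  induction h with
  | id p hp =>
    rcases hp with ⟨hpos, hneg⟩ | ⟨e, he, hpos, hneg⟩
    · exact .inl (satComp_of_atom_mem_of_natom_mem hpos hneg)
    · exact .inr ⟨e, he, fun _ _ => satComp_of_atom_mem_of_natom_mem hpos hneg⟩
  | orRoot hor _ ih => exact ih.root_of_imp (·.of_cons_cons_of_or_mem hor)
  | orNest hor _ ih => exact ih.nest_of_imp fun _ _ => (·.of_cons_cons_of_or_mem hor)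
  | andRoot hand _ _ ih₁ ih₂ => exact ih₁.root_of_imp₂ (·.of_cons_of_cons_of_and_mem hand ·) ih₂
  | andNest hand _ _ ih₁ ih₂ =>
    exact ih₁.nest_of_imp₂ (fun _ _ => (·.of_cons_of_cons_of_and_mem hand ·)) ih₂
  | box hbox _ ih =>
    rcases satCons_append_singleton_iff.1 ih with hφ | ih
    · exact .of_mem_of_forall_sat hbox fun _ v hv => by simpa [SatComp] using hφ v hv
    · exact ih
  | nrule s _ ih =>
    rcases satCons_append_singleton_iff.1 ih with hempty | ih
    · obtain ⟨v, hv⟩ := M.sig_nonempty s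
      simpa [SatComp] using hempty v hv
    · exact ih
  | @dia1 _ _ _ _ s' _ φ hrel hdia _ ih =>
    by_cases hφ : ∃ v ∈ M.sig s', sat M v φ
    · obtain ⟨v, hv, hφv⟩ := hφ
      exact satCons_middle_iff.2 <| .inr <|
        .of_mem_of_forall_sat hdia fun _ => ⟨v, hrel.sig_subset hΓ hv, hφv⟩
    · push Not at hφ
      exact ih.nest_of_imp fun v hv h => (satComp_cons.1 h).resolve_left (hφ v hv)
  | dia2 hrel _ ih =>
    rw [Multiset.cons_swap] at ih
    exact ih.nest_of_imp fun v hv =>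
      (·.of_cons_of_mem (Multiset.mem_cons_self _ _) fun hφ => ⟨v, hrel.sig_subset hΓ hv, hφ⟩)
  | @diaStar _ _ φ hdia _ ih =>
    by_cases hφ : sat M w φ
    · exact .of_mem_of_forall_sat hdia fun _ => ⟨w, M.sig_star ▸ Set.mem_univ w, hφ⟩
    · exact ih.root_of_imp fun h => (satComp_cons.1 h).resolve_left hφ

end Soundness

/-- Soundness of `NS(V)`: every derivable nested sequent is valid. -/
theorem stmt8 {P S : Type} (star : S) (Γ : Set (S × S))
    (root : Multiset (Fml P S)) (nest : List (S × Multiset (Fml P S)))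
    (h : Deriv star Γ root nest) :
    ValidSeq star Γ root nest :=
  fun _ _ w hΓ => h.satCons hΓ w
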